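/- arXiv:1811.02778 — 5 statements merged into one kernel-verified Lean document; each statement's English description precedes it below -/
import Mathlib

section
/- A linear subspace L of ℝ^{n+m} is an n-dimensional space-like subspace if and only if L is the column span of a block matrix [I_n; Y] (top block the n×n identity, bottom block an m×n real matrix Y) for some Y such that I_n − YᵀY is positive definite. -/
open Matrix

noncomputable section

/-- The diagonal matrix with `n` entries `1` followed by `m` entries `-1`. -/
def J (n m : ℕ) : Matrix (Fin n ⊕ Fin m) (Fin n ⊕ Fin m) ℝ :=
  Matrix.fromBlocks 1 0 0 (-1)

/-- The bilinear form `g(u,v) = uᵀ J v`. -/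
def g (n m : ℕ) (u v : Fin n ⊕ Fin m → ℝ) : ℝ := u ⬝ᵥ (J n m) *ᵥ v

/-- A subspace is space-like if `g` restricted to it is positive definite. -/
def SpaceLike (n m : ℕ) (L : Submodule ℝ (Fin n ⊕ Fin m → ℝ)) : Prop :=
  ∀ x ∈ L, x ≠ 0 → 0 < g n m x x

/-!
A space-like subspace meets the negative definite subspace `{x | x ∘ Sum.inl = 0}` only in `0`,
so projecting it onto the first `n` coordinates is injective, and by dimension count an
isomorphism. Hence an `n`-dimensional space-like `L` is the graph of a linear map
`Y : ℝⁿ → ℝᵐ`, i.e. the column span of `[Iₙ; Y]`. On that span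
`g([Iₙ; Y] a, [Iₙ; Y] a) = aᵀ (Iₙ - YᵀY) a`, so space-likeness is exactly positive definiteness
of `Iₙ - YᵀY`.
-/

section Graph

variable {K ι κ : Type*} [Field K] [Fintype ι] [DecidableEq ι]

lemma fromRows_one_mulVec (Y : Matrix κ ι K) (a : ι → K) :
    fromRows (1 : Matrix ι ι K) Y *ᵥ a = Sum.elim a (Y *ᵥ a) := by
  rw [fromRows_mulVec, one_mulVec]

lemma fromRows_one_mulVecLin_injective (Y : Matrix κ ι K) :
    Function.Injective (fromRows (1 : Matrix ι ι K) Y).mulVecLin := fun a b hab =>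
  funext fun i => by simpa [fromRows_one_mulVec] using congrFun hab (Sum.inl i)

lemma finrank_range_fromRows_one_mulVecLin [Fintype κ] (Y : Matrix κ ι K) :
    Module.finrank K (LinearMap.range (fromRows (1 : Matrix ι ι K) Y).mulVecLin) =
      Fintype.card ι := by
  rw [LinearMap.finrank_range_of_inj (fromRows_one_mulVecLin_injective Y),
    Module.finrank_fintype_fun_eq_card]

lemma LinearMap.exists_eq_fromRows_one_mulVecLin (f : (ι → K) →ₗ[K] (ι ⊕ κ → K))
    (hf : ∀ a, f a ∘ Sum.inl = a) :
    ∃ Y : Matrix κ ι K, f = (fromRows (1 : Matrix ι ι K) Y).mulVecLin := by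
  refine ⟨(toMatrix' f).toRows₂, ?_⟩
  have htop : (toMatrix' f).toRows₁ = 1 := by
    ext i j
    simpa [toRows₁, LinearMap.toMatrix'_apply, Pi.single_apply, one_apply, eq_comm]
      using congrFun (hf (Pi.single j 1)) i
  rw [← htop, fromRows_toRows, ← Matrix.toLin'_apply', Matrix.toLin'_toMatrix']

lemma Submodule.exists_eq_range_fromRows_one_mulVecLin [Fintype κ]
    (L : Submodule K (ι ⊕ κ → K))
    (hinj : Function.Injective ((LinearMap.funLeft K K Sum.inl).comp L.subtype))
    (hrank : Module.finrank K L = Fintype.card ι) :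
    ∃ Y : Matrix κ ι K, L = LinearMap.range (fromRows (1 : Matrix ι ι K) Y).mulVecLin := by
  let e := LinearMap.linearEquivOfInjective _ hinj
    (by rw [hrank, Module.finrank_fintype_fun_eq_card])
  obtain ⟨Y, hY⟩ := (L.subtype ∘ₗ e.symm.toLinearMap).exists_eq_fromRows_one_mulVecLin
    fun a => e.apply_symm_apply a
  refine ⟨Y, ?_⟩
  rw [← hY, LinearMap.range_comp_of_range_eq_top _ e.symm.range, Submodule.range_subtype]

end Graph

lemma g_sumElim_self (n m : ℕ) (a : Fin n → ℝ) (b : Fin m → ℝ) :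
    g n m (Sum.elim a b) (Sum.elim a b) = a ⬝ᵥ a - b ⬝ᵥ b := by
  simp [g, _root_.J, fromBlocks_mulVec, sumElim_dotProduct_sumElim, neg_mulVec, sub_eq_add_neg]

lemma g_fromRows_one_mulVec_self (n m : ℕ) (Y : Matrix (Fin m) (Fin n) ℝ) (a : Fin n → ℝ) :
    g n m (fromRows 1 Y *ᵥ a) (fromRows 1 Y *ᵥ a) = star a ⬝ᵥ ((1 - Yᵀ * Y) *ᵥ a) := by
  rw [fromRows_one_mulVec, g_sumElim_self, star_trivial, sub_mulVec, dotProduct_sub,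
    one_mulVec, ← mulVec_mulVec, dotProduct_mulVec a Yᵀ, vecMul_transpose]

lemma spaceLike_range_fromRows_one_mulVecLin_iff (n m : ℕ) (Y : Matrix (Fin m) (Fin n) ℝ) :
    SpaceLike n m (LinearMap.range (fromRows 1 Y).mulVecLin) ↔ (1 - Yᵀ * Y).PosDef := by
  have hherm : (1 - Yᵀ * Y).IsHermitian := by
    simpa using isHermitian_one.sub (isHermitian_conjTranspose_mul_self Y)
  have hne (a : Fin n → ℝ) : fromRows 1 Y *ᵥ a ≠ 0 ↔ a ≠ 0 :=
    map_ne_zero_iff _ (fromRows_one_mulVecLin_injective Y)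
  simp only [SpaceLike, LinearMap.mem_range, forall_exists_index, forall_apply_eq_imp_iff,
    posDef_iff_dotProduct_mulVec, hherm, true_and, mulVecLin_apply, hne,
    ← g_fromRows_one_mulVec_self]

lemma SpaceLike.injective_comp_inl {n m : ℕ} {L : Submodule ℝ (Fin n ⊕ Fin m → ℝ)}
    (hL : SpaceLike n m L) :
    Function.Injective ((LinearMap.funLeft ℝ ℝ Sum.inl).comp L.subtype) := by
  refine (injective_iff_map_eq_zero _).2 fun x hx => Subtype.ext (not_not.1 fun hx0 => ?_)
  have hpos := hL x x.2 hx0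
  rw [← Sum.elim_comp_inl_inr (x : Fin n ⊕ Fin m → ℝ), g_sumElim_self,
    show (x : Fin n ⊕ Fin m → ℝ) ∘ Sum.inl = 0 from hx, zero_dotProduct, zero_sub] at hpos
  have hnonneg := dotProduct_self_star_nonneg ((x : Fin n ⊕ Fin m → ℝ) ∘ Sum.inr)
  rw [star_trivial] at hnonneg
  linarith

theorem stmt1_general (n m : ℕ)
    (L : Submodule ℝ (Fin n ⊕ Fin m → ℝ)) :
    (SpaceLike n m L ∧ Module.finrank ℝ L = n) ↔
      ∃ Y : Matrix (Fin m) (Fin n) ℝ, (1 - Yᵀ * Y).PosDef ∧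
        L = LinearMap.range (Matrix.fromRows (1 : Matrix (Fin n) (Fin n) ℝ) Y).mulVecLin := by
  constructor
  · rintro ⟨hL, hrank⟩
    obtain ⟨Y, rfl⟩ := L.exists_eq_range_fromRows_one_mulVecLin hL.injective_comp_inl
      (by rw [hrank, Fintype.card_fin])
    exact ⟨Y, (spaceLike_range_fromRows_one_mulVecLin_iff n m Y).1 hL, rfl⟩
  · rintro ⟨Y, hY, rfl⟩
    exact ⟨(spaceLike_range_fromRows_one_mulVecLin_iff n m Y).2 hY,
      by rw [finrank_range_fromRows_one_mulVecLin, Fintype.card_fin]⟩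

/-- `L` is an `n`-dimensional space-like subspace iff `L` is the column span of a block
matrix `[Iₙ; Y]` with `Iₙ - YᵀY` positive definite. -/
theorem stmt1 (n m : ℕ) (hn : 0 < n) (hnm : n ≤ m)
    (L : Submodule ℝ (Fin n ⊕ Fin m → ℝ)) :
    (SpaceLike n m L ∧ Module.finrank ℝ L = n) ↔
      ∃ Y : Matrix (Fin m) (Fin n) ℝ, (1 - Yᵀ * Y).PosDef ∧
        L = LinearMap.range (Matrix.fromRows (1 : Matrix (Fin n) (Fin n) ℝ) Y).mulVecLin :=
  stmt1_general n m L
end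
end

section
/- Let Y be an m×n real matrix such that I_n − YᵀY is positive definite. Then I_m − YYᵀ is positive definite, and the block matrix A = [[(I_n−YᵀY)^{−1/2}, Yᵀ(I_m−YYᵀ)^{−1/2}], [Y(I_n−YᵀY)^{−1/2}, (I_m−YYᵀ)^{−1/2}]] (where M^{−1/2} denotes the inverse of the unique positive definite square root of a positive definite matrix M) satisfies Aᵀ J A = J, i.e. A ∈ O(n,m), and A maps the subspace L₀ onto the column span of [I_n; Y]. -/
/-!
Both `1 - YᵀY` and `1 - YYᵀ` are Schur complements of the identity blocks in
`[[1, Yᵀ], [Y, 1]]`, so semidefiniteness passes from one to the other, and Sylvester's identity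
`det (1 - YYᵀ) = det (1 - YᵀY)` upgrades it to definiteness. With the symmetric matrices
`a = (1 - YᵀY)^{-1/2}` and `t = (1 - YYᵀ)^{-1/2}`, the diagonal blocks of `AᵀJA` are
`a (1 - YᵀY) a = 1` and `-t (1 - YYᵀ) t = -1`, while the off-diagonal ones are `aYᵀt - aYᵀt`.
Finally `A` sends `L₀` onto the column span of `[1; Y] a`, which is that of `[1; Y]`
because `a` is invertible.
-/

open Matrix

noncomputable section

/-- The subspace of `ℝ^{n+m}` spanned by the first `n` standard basis vectors. -/
def L0 (n m : ℕ) : Submodule ℝ (Fin n ⊕ Fin m → ℝ) :=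
  Submodule.span ℝ (Set.range fun i : Fin n => (Pi.single (Sum.inl i) 1 : Fin n ⊕ Fin m → ℝ))

/-- The positive semidefinite square root of a positive semidefinite matrix
(the definition Mathlib had in December 2024, since removed). -/
def Matrix.PosSemidef.sqrt {n : Type*} [Fintype n] [DecidableEq n] {𝕜 : Type*} [RCLike 𝕜]
    [PartialOrder 𝕜] [StarOrderedRing 𝕜] {A : Matrix n n 𝕜} (hA : A.PosSemidef) : Matrix n n 𝕜 :=
  hA.isHermitian.eigenvectorUnitary.1 * diagonal ((↑) ∘ (√·) ∘ hA.isHermitian.eigenvalues) *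
    (star hA.isHermitian.eigenvectorUnitary : Matrix n n 𝕜)

namespace Matrix

section SquareRoot

open scoped ComplexOrder

variable {ι 𝕜 : Type*} [Fintype ι] [DecidableEq ι] [RCLike 𝕜] {A : Matrix ι ι 𝕜}

theorem PosSemidef.sqrt_mul_self (hA : A.PosSemidef) : hA.sqrt * hA.sqrt = A := by
  let U : Matrix ι ι 𝕜 := hA.isHermitian.eigenvectorUnitary
  let D : Matrix ι ι 𝕜 := diagonal ((↑) ∘ (√·) ∘ hA.isHermitian.eigenvalues)
  have hU : star U * U = 1 := Unitary.coe_star_mul_self _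
  have hD : D * D = diagonal ((↑) ∘ hA.isHermitian.eigenvalues) := by
    rw [diagonal_mul_diagonal]
    congr 1
    funext i
    simp only [Function.comp_apply, ← RCLike.ofReal_mul,
      Real.mul_self_sqrt (hA.eigenvalues_nonneg i)]
  calc hA.sqrt * hA.sqrt = U * (D * (star U * U) * D) * star U := by
        simp only [PosSemidef.sqrt, U, D, Matrix.mul_assoc]
    _ = A := by
        rw [hU, Matrix.mul_one, hD]
        conv_rhs => rw [hA.isHermitian.spectral_theorem]
        rfl

theorem PosSemidef.isHermitian_sqrt (hA : A.PosSemidef) : hA.sqrt.IsHermitian := by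
  rw [IsHermitian, PosSemidef.sqrt, conjTranspose_mul, conjTranspose_mul, diagonal_conjTranspose]
  have hD : star (RCLike.ofReal ∘ (√·) ∘ hA.isHermitian.eigenvalues : ι → 𝕜) =
      RCLike.ofReal ∘ (√·) ∘ hA.isHermitian.eigenvalues :=
    funext fun _ => RCLike.conj_ofReal _
  rw [hD, ← star_eq_conjTranspose, ← star_eq_conjTranspose, star_star, Matrix.mul_assoc]

theorem PosDef.isUnit_sqrt (hA : A.PosDef) : IsUnit hA.posSemidef.sqrt :=
  isUnit_of_mul_isUnit_left (hA.posSemidef.sqrt_mul_self ▸ hA.isUnit)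

theorem PosDef.sqrt_inv_mul_mul_sqrt_inv (hA : A.PosDef) :
    hA.posSemidef.sqrt⁻¹ * A * hA.posSemidef.sqrt⁻¹ = 1 := by
  suffices ∀ s : Matrix ι ι 𝕜, IsUnit s → s * s = A → s⁻¹ * A * s⁻¹ = 1 from
    this _ hA.isUnit_sqrt hA.posSemidef.sqrt_mul_self
  rintro s hs rfl
  rw [isUnit_iff_isUnit_det] at hs
  rw [← Matrix.mul_assoc, nonsing_inv_mul _ hs, Matrix.one_mul, mul_nonsing_inv _ hs]

end SquareRoot

open scoped ComplexOrder in
theorem PosDef.one_sub_mul_conjTranspose {m n 𝕜 : Type*} [Fintype m] [Fintype n]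
    [DecidableEq m] [DecidableEq n] [RCLike 𝕜] {A : Matrix m n 𝕜}
    (hA : (1 - Aᴴ * A).PosDef) : (1 - A * Aᴴ).PosDef := by
  let _ : Invertible (1 : Matrix n n 𝕜) := invertibleOne
  let _ : Invertible (1 : Matrix m m 𝕜) := invertibleOne
  have hM : (fromBlocks 1 Aᴴ A 1 : Matrix (n ⊕ m) (n ⊕ m) 𝕜).PosSemidef := by
    simpa using (PosDef.fromBlocks₂₂ 1 Aᴴ PosDef.one).mpr (by simpa using hA.posSemidef)
  have hSchur := (PosDef.fromBlocks₁₁ Aᴴ 1 PosDef.one).mp (by simpa using hM)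
  rw [inv_one, Matrix.mul_one, conjTranspose_conjTranspose] at hSchur
  rw [hSchur.posDef_iff_det_ne_zero, det_one_sub_mul_comm]
  exact hA.det_pos.ne'

theorem PosDef.one_sub_mul_transpose {m n : Type*} [Fintype m] [Fintype n]
    [DecidableEq m] [DecidableEq n] {A : Matrix m n ℝ}
    (hA : (1 - Aᵀ * A).PosDef) : (1 - A * Aᵀ).PosDef := by
  simp only [← conjTranspose_eq_transpose_of_trivial] at hA ⊢
  exact hA.one_sub_mul_conjTranspose

theorem PosDef.transpose_sqrt_inv {ι : Type*} [Fintype ι] [DecidableEq ι] {A : Matrix ι ι ℝ}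
    (hA : A.PosDef) : (hA.posSemidef.sqrt⁻¹)ᵀ = hA.posSemidef.sqrt⁻¹ := by
  rw [← conjTranspose_eq_transpose_of_trivial]
  exact hA.posSemidef.isHermitian_sqrt.inv

theorem range_mulVecLin_mul_of_isUnit {l m R : Type*} [CommRing R] [Fintype m] [DecidableEq m]
    (B : Matrix l m R) {a : Matrix m m R} (ha : IsUnit a) :
    LinearMap.range (B * a).mulVecLin = LinearMap.range B.mulVecLin := by
  rw [mulVecLin_mul, LinearMap.range_comp_of_range_eq_top]
  exact LinearMap.range_eq_top.mpr (mulVec_surjective_iff_isUnit.mpr ha)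

end Matrix

open Matrix

section

variable {n m : ℕ}

theorem transpose_fromBlocks_mul_J_mul_fromBlocks (Y : Matrix (Fin m) (Fin n) ℝ)
    {a : Matrix (Fin n) (Fin n) ℝ} {t : Matrix (Fin m) (Fin m) ℝ} (ha : aᵀ = a) (ht : tᵀ = t)
    (haY : a * (1 - Yᵀ * Y) * a = 1) (htY : t * (1 - Y * Yᵀ) * t = 1) :
    (fromBlocks a (Yᵀ * t) (Y * a) t)ᵀ * _root_.J n m * fromBlocks a (Yᵀ * t) (Y * a) t =
      _root_.J n m := by
  have haY' : a * a - a * (Yᵀ * (Y * a)) = 1 := by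
    rw [← haY]
    simp only [Matrix.mul_sub, Matrix.sub_mul, Matrix.mul_one, Matrix.mul_assoc]
  have htY' : t * (Y * (Yᵀ * t)) - t * t = -1 := by
    rw [← htY]
    simp only [Matrix.mul_sub, Matrix.sub_mul, Matrix.mul_one, Matrix.mul_assoc]
    abel
  rw [_root_.J, fromBlocks_transpose, fromBlocks_multiply, fromBlocks_multiply]
  simp only [Matrix.mul_one, Matrix.mul_zero, Matrix.mul_neg, add_zero, zero_add,
    Matrix.transpose_mul, ha, ht, Matrix.transpose_transpose, Matrix.mul_assoc]
  simp only [Matrix.neg_mul, Matrix.mul_assoc, ← sub_eq_add_neg]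
  rw [haY', htY', sub_self, sub_self]

theorem L0_eq_range_fromRows_one_zero :
    L0 n m = LinearMap.range
      (fromRows (1 : Matrix (Fin n) (Fin n) ℝ) (0 : Matrix (Fin m) (Fin n) ℝ)).mulVecLin := by
  rw [range_mulVecLin, L0, col_def]
  refine congrArg _ (congrArg _ (funext fun j => funext fun i => ?_))
  cases i with
  | inl i => simp [one_apply, Pi.single_apply, eq_comm]
  | inr i => simp

theorem map_mulVecLin_fromBlocks_L0 (Y : Matrix (Fin m) (Fin n) ℝ) {a : Matrix (Fin n) (Fin n) ℝ}
    (ha : IsUnit a) (B : Matrix (Fin n) (Fin m) ℝ) (D : Matrix (Fin m) (Fin m) ℝ) :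
    Submodule.map (fromBlocks a B (Y * a) D).mulVecLin (L0 n m) =
      LinearMap.range (fromRows (1 : Matrix (Fin n) (Fin n) ℝ) Y).mulVecLin := by
  rw [L0_eq_range_fromRows_one_zero, ← LinearMap.range_comp, ← mulVecLin_mul,
    fromBlocks_mul_fromRows]
  simp only [Matrix.mul_one, Matrix.mul_zero, add_zero]
  rw [show fromRows a (Y * a) = fromRows 1 Y * a by rw [fromRows_mul, Matrix.one_mul],
    range_mulVecLin_mul_of_isUnit _ ha]

end

theorem stmt2_general (n m : ℕ)
    (Y : Matrix (Fin m) (Fin n) ℝ) (hY : (1 - Yᵀ * Y).PosDef) :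
    (1 - Y * Yᵀ).PosDef ∧
    ∀ (hY' : (1 - Y * Yᵀ).PosDef)
      (A : Matrix (Fin n ⊕ Fin m) (Fin n ⊕ Fin m) ℝ),
      A = Matrix.fromBlocks (hY.posSemidef.sqrt)⁻¹ (Yᵀ * (hY'.posSemidef.sqrt)⁻¹)
            (Y * (hY.posSemidef.sqrt)⁻¹) (hY'.posSemidef.sqrt)⁻¹ →
      Aᵀ * J n m * A = J n m ∧
      Submodule.map A.mulVecLin (L0 n m) =
        LinearMap.range (Matrix.fromRows (1 : Matrix (Fin n) (Fin n) ℝ) Y).mulVecLin := by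
  refine ⟨hY.one_sub_mul_transpose, fun hY' A hA => ?_⟩
  subst hA
  exact ⟨transpose_fromBlocks_mul_J_mul_fromBlocks Y hY.transpose_sqrt_inv hY'.transpose_sqrt_inv
      hY.sqrt_inv_mul_mul_sqrt_inv hY'.sqrt_inv_mul_mul_sqrt_inv,
    map_mulVecLin_fromBlocks_L0 Y (isUnit_nonsing_inv_iff.mpr hY.isUnit_sqrt) _ _⟩

/-- Given `Y` with `Iₙ - YᵀY` positive definite, `I_m - YYᵀ` is positive definite and the
explicit block matrix `A` lies in `O(n,m)` and maps `L₀` onto the column span of `[Iₙ; Y]`. -/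
theorem stmt2 (n m : ℕ) (hn : 0 < n) (hnm : n ≤ m)
    (Y : Matrix (Fin m) (Fin n) ℝ) (hY : (1 - Yᵀ * Y).PosDef) :
    (1 - Y * Yᵀ).PosDef ∧
    ∀ (hY' : (1 - Y * Yᵀ).PosDef)
      (A : Matrix (Fin n ⊕ Fin m) (Fin n ⊕ Fin m) ℝ),
      A = Matrix.fromBlocks (hY.posSemidef.sqrt)⁻¹ (Yᵀ * (hY'.posSemidef.sqrt)⁻¹)
            (Y * (hY.posSemidef.sqrt)⁻¹) (hY'.posSemidef.sqrt)⁻¹ →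
      Aᵀ * J n m * A = J n m ∧
      Submodule.map A.mulVecLin (L0 n m) =
        LinearMap.range (Matrix.fromRows (1 : Matrix (Fin n) (Fin n) ℝ) Y).mulVecLin :=
  stmt2_general n m Y hY
end
end

section
/- For t = (t₁, …, tₙ) ∈ ℝⁿ, the matrix exp(Σᵢ tᵢ R_{i,n+i}) is block diagonal (i.e. its top-right n×m block and bottom-left m×n block vanish) if and only if tᵢ ∈ πℤ for every i. Consequently, the unit lattice Γ = {A ∈ 𝔞 : exp(A) is block diagonal with blocks in O(n) and O(m)}, where 𝔞 is the real span of R_{1,n+1}, …, R_{n,2n}, equals {Σᵢ mᵢ π R_{i,n+i} : mᵢ ∈ ℤ}. -/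
open Matrix

noncomputable section

/-- The matrix `R_{i,n+i}`: entry `1` at `(i, n+i)`, entry `-1` at `(n+i, i)`, `0` elsewhere. -/
def R (n m : ℕ) (i : Fin n) : Matrix (Fin n ⊕ Fin m) (Fin n ⊕ Fin m) ℝ :=
  Matrix.of fun a b =>
    match a, b with
    | Sum.inl k, Sum.inr j => if k = i ∧ (j : ℕ) = (i : ℕ) then 1 else 0
    | Sum.inr j, Sum.inl k => if k = i ∧ (j : ℕ) = (i : ℕ) then -1 else 0
    | _, _ => 0

/-!
The matrices `R_{i,n+i}` annihilate each other pairwise and satisfy `R³ = -R`, so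
`exp (∑ tᵢ Rᵢ) = 1 + ∑ (sin tᵢ • Rᵢ + (1 - cos tᵢ) • Rᵢ²)`, whose off-diagonal blocks have the
entries `± sin tᵢ`. In the description of the lattice the orthogonality of the diagonal blocks
comes for free: `∑ tᵢ Rᵢ` is skew-symmetric, so its exponential is orthogonal, and the diagonal
blocks of an orthogonal block-diagonal matrix are orthogonal.
-/

open scoped Nat

section

variable {𝔸 : Type*} [Ring 𝔸] [Algebra ℝ 𝔸] {a : 𝔸}

theorem pow_two_mul_add_one_of_mul_mul_self_eq_neg (ha : a * a * a = -a) (k : ℕ) :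
    a ^ (2 * k + 1) = (-1 : ℝ) ^ k • a := by
  induction k with
  | zero => simp
  | succ k ih =>
    rw [show 2 * (k + 1) + 1 = 2 * k + 1 + 1 + 1 by ring, pow_succ, pow_succ, ih,
      smul_mul_assoc, smul_mul_assoc, ha, pow_succ, mul_neg_one, neg_smul, smul_neg]

theorem pow_two_mul_succ_of_mul_mul_self_eq_neg (ha : a * a * a = -a) (k : ℕ) :
    a ^ (2 * (k + 1)) = (-1 : ℝ) ^ k • (a * a) := by
  rw [mul_add_one, pow_succ, pow_two_mul_add_one_of_mul_mul_self_eq_neg ha, smul_mul_assoc]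

variable [TopologicalSpace 𝔸] [IsTopologicalRing 𝔸] [ContinuousSMul ℝ 𝔸] [T2Space 𝔸]

theorem exp_smul_of_mul_mul_self_eq_neg (ha : a * a * a = -a) (t : ℝ) :
    NormedSpace.exp (t • a) = 1 + Real.sin t • a + (1 - Real.cos t) • (a * a) := by
  have hodd : HasSum (fun k : ℕ => ((2 * k + 1)! : ℝ)⁻¹ • (t • a) ^ (2 * k + 1))
      (Real.sin t • a) := by
    convert (Real.hasSum_sin t).smul_const a using 2 with k
    rw [smul_pow, pow_two_mul_add_one_of_mul_mul_self_eq_neg ha, smul_smul, smul_smul]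
    ring_nf
  have hcos_tail : HasSum (fun k : ℕ => (-1 : ℝ) ^ (k + 1) * t ^ (2 * (k + 1)) / (2 * (k + 1))!)
      (Real.cos t - 1) := by
    refine (hasSum_nat_add_iff (f := fun k ↦ (-1 : ℝ) ^ k * t ^ (2 * k) / (2 * k)!) 1).2 ?_
    simpa using Real.hasSum_cos t
  have heven_tail : HasSum (fun k : ℕ => ((2 * (k + 1))! : ℝ)⁻¹ • (t • a) ^ (2 * (k + 1)))
      ((1 - Real.cos t) • (a * a)) := by
    convert hcos_tail.neg.smul_const (a * a) using 2 with k
    · rw [smul_pow, pow_two_mul_succ_of_mul_mul_self_eq_neg ha, smul_smul, smul_smul]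
      ring_nf
    · rw [neg_sub]
  have heven : HasSum (fun k : ℕ => ((2 * k)! : ℝ)⁻¹ • (t • a) ^ (2 * k))
      (1 + (1 - Real.cos t) • (a * a)) := by
    simpa [add_comm] using
      (hasSum_nat_add_iff (f := fun k : ℕ => ((2 * k)! : ℝ)⁻¹ • (t • a) ^ (2 * k)) 1).1 heven_tail
  rw [NormedSpace.exp_eq_tsum ℝ, add_right_comm]
  exact (HasSum.even_add_odd (f := fun k : ℕ => (k ! : ℝ)⁻¹ • (t • a) ^ k) heven hodd).tsum_eq

end

theorem Matrix.transpose_exp_mul_exp_of_transpose_eq_neg {ι 𝔸 : Type*} [Fintype ι]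
    [DecidableEq ι] [NormedCommRing 𝔸] [NormedAlgebra ℚ 𝔸] [CompleteSpace 𝔸] {A : Matrix ι ι 𝔸}
    (hA : Aᵀ = -A) :
    (NormedSpace.exp A)ᵀ * NormedSpace.exp A = 1 := by
  rw [← Matrix.exp_transpose, hA, ← Matrix.exp_add_of_commute _ _ ((Commute.refl A).neg_left),
    neg_add_cancel, NormedSpace.exp_zero]

theorem Matrix.transpose_mul_self_toBlocks_eq_one {ι κ α : Type*} [Fintype ι] [Fintype κ]
    [DecidableEq ι] [DecidableEq κ] [Semiring α] {M : Matrix (ι ⊕ κ) (ι ⊕ κ) α}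
    (hM : Mᵀ * M = 1) (h₁₂ : M.toBlocks₁₂ = 0) (h₂₁ : M.toBlocks₂₁ = 0) :
    M.toBlocks₁₁ᵀ * M.toBlocks₁₁ = 1 ∧ M.toBlocks₂₂ᵀ * M.toBlocks₂₂ = 1 := by
  rw [← fromBlocks_toBlocks M, h₁₂, h₂₁, fromBlocks_transpose, fromBlocks_multiply,
    ← fromBlocks_one, fromBlocks_inj] at hM
  simp only [transpose_zero, Matrix.zero_mul, add_zero, zero_add] at hM
  exact ⟨hM.1, hM.2.2.2⟩

section R

variable {n m : ℕ}

theorem R_eq_single_sub_single (hnm : n ≤ m) (i : Fin n) :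
    R n m i =
      single (.inl i) (.inr (i.castLE hnm)) 1 - single (.inr (i.castLE hnm)) (.inl i) 1 := by
  ext (k | j) (k' | j') <;> simp [R, single, Fin.ext_iff, and_comm, eq_comm, neg_ite]

theorem transpose_R (hnm : n ≤ m) (i : Fin n) : (R n m i)ᵀ = -R n m i := by
  simp [R_eq_single_sub_single hnm]

theorem R_mul_R_of_ne (hnm : n ≤ m) {i j : Fin n} (h : i ≠ j) : R n m i * R n m j = 0 := by
  have h' : i.castLE hnm ≠ j.castLE hnm := (Fin.castLE_injective hnm).ne h
  simp [R_eq_single_sub_single hnm, sub_mul, mul_sub, h, h']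

theorem R_mul_R_mul_R (hnm : n ≤ m) (i : Fin n) : R n m i * R n m i * R n m i = -R n m i := by
  simp only [R_eq_single_sub_single hnm, mul_sub, sub_mul, ne_eq, reduceCtorEq, not_false_eq_true,
    single_mul_single_of_ne, single_mul_single_same, mul_one, zero_sub, sub_zero, neg_mul, neg_zero,
    sub_neg_eq_add, neg_sub]
  abel

theorem R_mul_R (hnm : n ≤ m) (i : Fin n) :
    R n m i * R n m i =
      -(single (.inl i) (.inl i) 1 + single (.inr (i.castLE hnm)) (.inr (i.castLE hnm)) 1) := by
  simp only [R_eq_single_sub_single hnm, mul_sub, sub_mul, ne_eq, reduceCtorEq, not_false_eq_true,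
    single_mul_single_of_ne, single_mul_single_same, mul_one, zero_sub, sub_zero, neg_add_rev]
  abel

theorem R_mul_R_mul_of_ne (hnm : n ≤ m) {i j : Fin n} (h : i ≠ j)
    (X : Matrix (Fin n ⊕ Fin m) (Fin n ⊕ Fin m) ℝ) : R n m i * (R n m j * X) = 0 := by
  rw [← Matrix.mul_assoc, R_mul_R_of_ne hnm h, Matrix.zero_mul]

theorem commute_R (hnm : n ≤ m) (i j : Fin n) : Commute (R n m i) (R n m j) := by
  obtain rfl | h := eq_or_ne i j
  · exact .refl _
  · exact (R_mul_R_of_ne hnm h).trans (R_mul_R_of_ne hnm h.symm).symm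

theorem exp_sum_smul_R (hnm : n ≤ m) (t : Fin n → ℝ) (s : Finset (Fin n)) :
    NormedSpace.exp (∑ i ∈ s, t i • R n m i) =
      1 + ∑ i ∈ s, (Real.sin (t i) • R n m i + (1 - Real.cos (t i)) • (R n m i * R n m i)) := by
  induction s using Finset.induction_on with
  | empty => simp
  | insert a s ha ih =>
    have hne : ∀ i ∈ s, a ≠ i := fun i hi h => ha (h ▸ hi)
    have hcomm : Commute (t a • R n m a) (∑ i ∈ s, t i • R n m i) :=
      .sum_right _ _ _ fun i _ => ((commute_R hnm a i).smul_left _).smul_right _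
    have hanni : (Real.sin (t a) • R n m a + (1 - Real.cos (t a)) • (R n m a * R n m a)) *
        ∑ i ∈ s, (Real.sin (t i) • R n m i + (1 - Real.cos (t i)) • (R n m i * R n m i)) = 0 := by
      rw [Finset.mul_sum]
      refine Finset.sum_eq_zero fun i hi => ?_
      simp [add_mul, mul_add, Matrix.mul_assoc, R_mul_R_of_ne hnm (hne i hi),
        R_mul_R_mul_of_ne hnm (hne i hi)]
    rw [Finset.sum_insert ha, Finset.sum_insert ha, Matrix.exp_add_of_commute _ _ hcomm, ih,
      exp_smul_of_mul_mul_self_eq_neg (R_mul_R_mul_R hnm a), add_assoc, add_mul, one_mul,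
      mul_add, mul_one, hanni]
    abel

theorem toBlocks₁₂_exp_sum_smul_R (hnm : n ≤ m) (t : Fin n → ℝ) :
    (NormedSpace.exp (∑ i, t i • R n m i)).toBlocks₁₂ =
      of fun k j => if k.castLE hnm = j then Real.sin (t k) else 0 := by
  rw [exp_sum_smul_R hnm t]
  simp only [R_mul_R hnm]
  simp only [R_eq_single_sub_single hnm]
  ext k j
  simp [toBlocks₁₂, Matrix.sum_apply, single, ite_and]

theorem toBlocks₂₁_exp_sum_smul_R (hnm : n ≤ m) (t : Fin n → ℝ) :
    (NormedSpace.exp (∑ i, t i • R n m i)).toBlocks₂₁ =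
      of fun j k => if k.castLE hnm = j then -Real.sin (t k) else 0 := by
  rw [exp_sum_smul_R hnm t]
  simp only [R_mul_R hnm]
  simp only [R_eq_single_sub_single hnm]
  ext j k
  simp [toBlocks₂₁, Matrix.sum_apply, single, and_comm, ite_and, neg_ite]

theorem exp_sum_smul_R_offDiagBlocks_eq_zero_iff (hnm : n ≤ m) (t : Fin n → ℝ) :
    ((NormedSpace.exp (∑ i, t i • R n m i)).toBlocks₁₂ = 0 ∧
      (NormedSpace.exp (∑ i, t i • R n m i)).toBlocks₂₁ = 0) ↔ ∀ i, Real.sin (t i) = 0 := by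
  rw [toBlocks₁₂_exp_sum_smul_R hnm, toBlocks₂₁_exp_sum_smul_R hnm]
  refine ⟨fun ⟨h, _⟩ i => by simpa using congr_fun₂ h i (i.castLE hnm), fun h => ?_⟩
  constructor <;> ext <;> simp [h]

theorem transpose_sum_smul_R (hnm : n ≤ m) (t : Fin n → ℝ) :
    (∑ i, t i • R n m i)ᵀ = -∑ i, t i • R n m i := by
  simp [Matrix.transpose_sum, transpose_R hnm]

end R

theorem stmt9_general (n m : ℕ) (hnm : n ≤ m) :
    (∀ t : Fin n → ℝ,
      ((NormedSpace.exp (∑ i, t i • R n m i)).toBlocks₁₂ = 0 ∧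
       (NormedSpace.exp (∑ i, t i • R n m i)).toBlocks₂₁ = 0) ↔
      ∀ i, ∃ k : ℤ, t i = k * Real.pi) ∧
    {A : Matrix (Fin n ⊕ Fin m) (Fin n ⊕ Fin m) ℝ |
        (∃ t : Fin n → ℝ, A = ∑ i, t i • R n m i) ∧
        (NormedSpace.exp A).toBlocks₁₂ = 0 ∧
        (NormedSpace.exp A).toBlocks₂₁ = 0 ∧
        ((NormedSpace.exp A).toBlocks₁₁)ᵀ * (NormedSpace.exp A).toBlocks₁₁ = 1 ∧
        ((NormedSpace.exp A).toBlocks₂₂)ᵀ * (NormedSpace.exp A).toBlocks₂₂ = 1} =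
      {A : Matrix (Fin n ⊕ Fin m) (Fin n ⊕ Fin m) ℝ |
        ∃ c : Fin n → ℤ, A = ∑ i, ((c i : ℝ) * Real.pi) • R n m i} := by
  have hblock (t : Fin n → ℝ) :
      ((NormedSpace.exp (∑ i, t i • R n m i)).toBlocks₁₂ = 0 ∧
       (NormedSpace.exp (∑ i, t i • R n m i)).toBlocks₂₁ = 0) ↔
      ∀ i, ∃ k : ℤ, t i = k * Real.pi := by
    rw [exp_sum_smul_R_offDiagBlocks_eq_zero_iff hnm]
    exact forall_congr' fun i => Real.sin_eq_zero_iff.trans (exists_congr fun k => eq_comm)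
  refine ⟨hblock, Set.ext fun A => ⟨?_, ?_⟩⟩
  · rintro ⟨⟨t, rfl⟩, h₁₂, h₂₁, -⟩
    choose c hc using (hblock t).1 ⟨h₁₂, h₂₁⟩
    exact ⟨c, by simp_rw [hc]⟩
  · rintro ⟨c, rfl⟩
    obtain ⟨h₁₂, h₂₁⟩ := (hblock _).2 fun i => ⟨c i, rfl⟩
    exact ⟨⟨_, rfl⟩, h₁₂, h₂₁, Matrix.transpose_mul_self_toBlocks_eq_one
      (Matrix.transpose_exp_mul_exp_of_transpose_eq_neg (transpose_sum_smul_R hnm _)) h₁₂ h₂₁⟩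

/-- `exp(Σᵢ tᵢ R_{i,n+i})` is block diagonal iff every `tᵢ ∈ πℤ`; consequently the unit
lattice `Γ = {A ∈ 𝔞 : exp A ∈ O(n) × O(m)}` equals `{Σᵢ mᵢ π R_{i,n+i} : mᵢ ∈ ℤ}`. -/
theorem stmt9 (n m : ℕ) (hn : 0 < n) (hnm : n ≤ m) :
    (∀ t : Fin n → ℝ,
      ((NormedSpace.exp (∑ i, t i • R n m i)).toBlocks₁₂ = 0 ∧
       (NormedSpace.exp (∑ i, t i • R n m i)).toBlocks₂₁ = 0) ↔
      ∀ i, ∃ k : ℤ, t i = k * Real.pi) ∧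
    {A : Matrix (Fin n ⊕ Fin m) (Fin n ⊕ Fin m) ℝ |
        (∃ t : Fin n → ℝ, A = ∑ i, t i • R n m i) ∧
        (NormedSpace.exp A).toBlocks₁₂ = 0 ∧
        (NormedSpace.exp A).toBlocks₂₁ = 0 ∧
        ((NormedSpace.exp A).toBlocks₁₁)ᵀ * (NormedSpace.exp A).toBlocks₁₁ = 1 ∧
        ((NormedSpace.exp A).toBlocks₂₂)ᵀ * (NormedSpace.exp A).toBlocks₂₂ = 1} =
      {A : Matrix (Fin n ⊕ Fin m) (Fin n ⊕ Fin m) ℝ |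
        ∃ c : Fin n → ℤ, A = ∑ i, ((c i : ℝ) * Real.pi) • R n m i} :=
  stmt9_general n m hnm
end
end

section
/- Let V be a real inner product space, let A₁, …, A_r ∈ V be pairwise orthogonal vectors of common norm α > 0, and let X = Σᵢ xᵢ Aᵢ be a unit vector. Then for every nonzero integer vector (m₁, …, m_r) ∈ ℤʳ with ⟨X, Σᵢ mᵢ Aᵢ⟩ ≠ 0, one has ⟨Σᵢ mᵢAᵢ, Σᵢ mᵢAᵢ⟩ / (2 |⟨X, Σᵢ mᵢAᵢ⟩|) ≥ 1/(2 maxᵢ |xᵢ|), and this bound is attained for some such integer vector; hence the minimum of ⟨A, A⟩ / (2|⟨X, A⟩|) over nonzero lattice vectors A = Σᵢ mᵢAᵢ (mᵢ ∈ ℤ) with ⟨X, A⟩ ≠ 0 equals 1/(2 maxᵢ |xᵢ|). -/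
/-!
In the coordinates `mᵢ` the ratio is `α² Σ mᵢ² / (2 α² |Σ xᵢ mᵢ|) = Σ mᵢ² / (2 |Σ xᵢ mᵢ|)`.
Since `|m| ≤ m²` for every integer `m`, `|Σ xᵢ mᵢ| ≤ maxᵢ |xᵢ| · Σ mᵢ²`, which is the lower
bound; it is attained by the basis vector `A_{i₀}` with `|x_{i₀}|` maximal.
-/

open Finset

lemma inner_sum_smul_sum_smul_of_pairwise_inner_eq_zero {ι V : Type*} [Fintype ι]
    [NormedAddCommGroup V] [InnerProductSpace ℝ V] {A : ι → V}
    (horth : ∀ i j, i ≠ j → inner ℝ (A i) (A j) = 0) (a b : ι → ℝ) :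
    inner ℝ (∑ i, a i • A i) (∑ i, b i • A i) = ∑ i, a i * b i * ‖A i‖ ^ 2 := by
  simp_rw [sum_inner, inner_sum, real_inner_smul_left, real_inner_smul_right]
  refine sum_congr rfl fun i _ => ?_
  rw [sum_eq_single i (fun j _ hji => by rw [horth i j hji.symm, mul_zero, mul_zero])
    (by simp), real_inner_self_eq_norm_sq, mul_assoc]

lemma Int.abs_cast_le_mul_self (n : ℤ) : |(n : ℝ)| ≤ n * n := by
  rw [← Int.cast_abs, ← Int.natCast_natAbs, ← sq]
  exact_mod_cast Int.natAbs_le_self_sq n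

section Lattice

variable {ι : Type*} [Fintype ι] {x : ι → ℝ} {M : ℝ}

lemma abs_sum_mul_intCast_le_mul_sum_mul_self (hM : ∀ i, |x i| ≤ M) (c : ι → ℤ) :
    |∑ i, x i * c i| ≤ M * ∑ i, (c i : ℝ) * c i :=
  calc |∑ i, x i * c i| ≤ ∑ i, |x i| * |(c i : ℝ)| := by
        simpa only [abs_mul] using abs_sum_le_sum_abs (fun i => x i * c i) univ
    _ ≤ ∑ i, M * ((c i : ℝ) * c i) :=
        sum_le_sum fun i _ => mul_le_mul (hM i) (Int.abs_cast_le_mul_self _) (abs_nonneg _)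
          ((abs_nonneg _).trans (hM i))
    _ = M * ∑ i, (c i : ℝ) * c i := (mul_sum _ _ _).symm

lemma one_div_two_mul_le_sum_mul_self_div (hM : ∀ i, |x i| ≤ M) (c : ι → ℤ)
    (hc : ∑ i, x i * c i ≠ 0) :
    1 / (2 * M) ≤ (∑ i, (c i : ℝ) * c i) / (2 * |∑ i, x i * c i|) := by
  have hS : 0 < |∑ i, x i * c i| := abs_pos.mpr hc
  have hle := abs_sum_mul_intCast_le_mul_sum_mul_self hM c
  have hQ : 0 ≤ ∑ i, (c i : ℝ) * c i := sum_nonneg fun i _ => mul_self_nonneg _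
  have hMpos : 0 < M := pos_of_mul_pos_left (hS.trans_le hle) hQ
  rw [div_le_div_iff₀ (by positivity) (by positivity)]
  linarith

lemma sum_mul_intCast_single [DecidableEq ι] (y : ι → ℝ) (i₀ : ι) :
    ∑ i, y i * ((Pi.single i₀ 1 : ι → ℤ) i : ℝ) = y i₀ := by
  simp [Pi.single_apply]

end Lattice

theorem stmt11_general {V : Type*} [NormedAddCommGroup V] [InnerProductSpace ℝ V]
    (r : ℕ) (hr : 0 < r) (A : Fin r → V) (α : ℝ)
    (horth : ∀ i j, i ≠ j → (inner ℝ (A i) (A j) : ℝ) = 0)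
    (hnorm : ∀ i, ‖A i‖ = α)
    (x : Fin r → ℝ) (hX : ‖∑ i, x i • A i‖ = 1) :
    (∀ c : Fin r → ℤ, c ≠ 0 →
      (inner ℝ (∑ i, x i • A i) (∑ i, (c i : ℝ) • A i) : ℝ) ≠ 0 →
      (inner ℝ (∑ i, (c i : ℝ) • A i) (∑ i, (c i : ℝ) • A i) : ℝ) /
          (2 * |(inner ℝ (∑ i, x i • A i) (∑ i, (c i : ℝ) • A i) : ℝ)|) ≥
        1 / (2 * Finset.univ.sup' ⟨⟨0, hr⟩, Finset.mem_univ _⟩ fun i => |x i|)) ∧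
    (∃ c : Fin r → ℤ, c ≠ 0 ∧
      (inner ℝ (∑ i, x i • A i) (∑ i, (c i : ℝ) • A i) : ℝ) ≠ 0 ∧
      (inner ℝ (∑ i, (c i : ℝ) • A i) (∑ i, (c i : ℝ) • A i) : ℝ) /
          (2 * |(inner ℝ (∑ i, x i • A i) (∑ i, (c i : ℝ) • A i) : ℝ)|) =
        1 / (2 * Finset.univ.sup' ⟨⟨0, hr⟩, Finset.mem_univ _⟩ fun i => |x i|)) := by
  have hinner (a b : Fin r → ℝ) :
      inner ℝ (∑ i, a i • A i) (∑ i, b i • A i) = α ^ 2 * ∑ i, a i * b i := by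
    simp only [inner_sum_smul_sum_smul_of_pairwise_inner_eq_zero horth, hnorm, ← sum_mul,
      mul_comm]
  have hcancel (Q S : ℝ) (hα : α ^ 2 ≠ 0) : α ^ 2 * Q / (2 * |α ^ 2 * S|) = Q / (2 * |S|) := by
    rw [abs_mul, abs_of_nonneg (sq_nonneg α), mul_left_comm, mul_div_mul_left _ _ hα]
  obtain ⟨i₀, -, hi₀⟩ := exists_mem_eq_sup' ⟨⟨0, hr⟩, mem_univ _⟩ fun i => |x i|
  have hM (i : Fin r) : |x i| ≤ |x i₀| := hi₀ ▸ le_sup' (fun i => |x i|) (mem_univ i)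
  have hunit : α ^ 2 * ∑ i, x i * x i = 1 := by
    rw [← hinner, real_inner_self_eq_norm_sq, hX, one_pow]
  simp only [hinner, hi₀]
  refine ⟨fun c _ hc => ?_, Pi.single i₀ 1, by simp, ?_⟩
  · rw [hcancel _ _ (left_ne_zero_of_mul hc)]
    exact one_div_two_mul_le_sum_mul_self_div hM c (right_ne_zero_of_mul hc)
  · have hα : α ^ 2 ≠ 0 := left_ne_zero_of_mul_eq_one hunit
    have hx₀ : x i₀ ≠ 0 := by
      intro h
      have hx (i : Fin r) : x i = 0 := abs_nonpos_iff.mp (by simpa [h] using hM i)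
      simp [hx] at hunit
    simp only [sum_mul_intCast_single, Pi.single_eq_same, Int.cast_one]
    exact ⟨mul_ne_zero hα hx₀, hcancel _ _ hα⟩

/-- In a real inner product space, given pairwise orthogonal vectors `A₁,…,A_r` of common
norm `α > 0` and a unit vector `X = Σᵢ xᵢ Aᵢ`, the quantity `⟨A,A⟩/(2|⟨X,A⟩|)` over nonzero
lattice vectors `A = Σᵢ mᵢ Aᵢ` with `⟨X,A⟩ ≠ 0` is bounded below by `1/(2 maxᵢ |xᵢ|)`, and
the bound is attained. -/
theorem stmt11 {V : Type*} [NormedAddCommGroup V] [InnerProductSpace ℝ V]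
    (r : ℕ) (hr : 0 < r) (A : Fin r → V) (α : ℝ) (hα : 0 < α)
    (horth : ∀ i j, i ≠ j → (inner ℝ (A i) (A j) : ℝ) = 0)
    (hnorm : ∀ i, ‖A i‖ = α)
    (x : Fin r → ℝ) (hX : ‖∑ i, x i • A i‖ = 1) :
    (∀ c : Fin r → ℤ, c ≠ 0 →
      (inner ℝ (∑ i, x i • A i) (∑ i, (c i : ℝ) • A i) : ℝ) ≠ 0 →
      (inner ℝ (∑ i, (c i : ℝ) • A i) (∑ i, (c i : ℝ) • A i) : ℝ) /
          (2 * |(inner ℝ (∑ i, x i • A i) (∑ i, (c i : ℝ) • A i) : ℝ)|) ≥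
        1 / (2 * Finset.univ.sup' ⟨⟨0, hr⟩, Finset.mem_univ _⟩ fun i => |x i|)) ∧
    (∃ c : Fin r → ℤ, c ≠ 0 ∧
      (inner ℝ (∑ i, x i • A i) (∑ i, (c i : ℝ) • A i) : ℝ) ≠ 0 ∧
      (inner ℝ (∑ i, (c i : ℝ) • A i) (∑ i, (c i : ℝ) • A i) : ℝ) /
          (2 * |(inner ℝ (∑ i, x i • A i) (∑ i, (c i : ℝ) • A i) : ℝ)|) =
        1 / (2 * Finset.univ.sup' ⟨⟨0, hr⟩, Finset.mem_univ _⟩ fun i => |x i|)) :=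
  stmt11_general r hr A α horth hnorm x hX
end

section
/- For x = (x₁, …, xₙ) ∈ ℝⁿ and y = (y₁, …, yₙ) ∈ ℝⁿ, the subspaces of ℝ^{n+m} spanned respectively by {cos(xᵢ) eᵢ − sin(xᵢ) e_{n+i} : 1 ≤ i ≤ n} and by {cosh(yᵢ) eᵢ + sinh(yᵢ) e_{n+i} : 1 ≤ i ≤ n} are equal if and only if for every i one has cos(xᵢ) ≠ 0 and tanh(yᵢ) = −tan(xᵢ). -/
open Matrix

noncomputable section

/-- The standard basis vector `eᵢ`, `1 ≤ i ≤ n`. -/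
def eInl (n m : ℕ) (i : Fin n) : Fin n ⊕ Fin m → ℝ := Pi.single (Sum.inl i) 1

/-- The standard basis vector `e_{n+j}`, `1 ≤ j ≤ m`. -/
def eInr (n m : ℕ) (j : Fin m) : Fin n ⊕ Fin m → ℝ := Pi.single (Sum.inr j) 1

lemma eval_sum {n m : ℕ} (hnm : n ≤ m) (a b c : Fin n → ℝ) (i : Fin n) :
    (∑ j, c j • (a j • eInl n m j + b j • eInr n m ⟨(j : ℕ), lt_of_lt_of_le j.isLt hnm⟩))
      (Sum.inl i) = c i * a i ∧
    (∑ j, c j • (a j • eInl n m j + b j • eInr n m ⟨(j : ℕ), lt_of_lt_of_le j.isLt hnm⟩))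
      (Sum.inr ⟨(i : ℕ), lt_of_lt_of_le i.isLt hnm⟩) = c i * b i := by
  constructor <;>
  · rw [Finset.sum_apply, Finset.sum_eq_single i]
    · simp [eInl, eInr, Pi.single_apply]
    · intro j _ hj
      simp [eInl, eInr, Pi.single_apply, Fin.val_eq_val, hj]
    · simp

/-- The subspace spanned by the `cos(xᵢ) eᵢ - sin(xᵢ) e_{n+i}` equals the subspace spanned
by the `cosh(yᵢ) eᵢ + sinh(yᵢ) e_{n+i}` iff `cos(xᵢ) ≠ 0` and `tanh(yᵢ) = -tan(xᵢ)` for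
every `i`. -/
theorem stmt15 (n m : ℕ) (hn : 0 < n) (hnm : n ≤ m)
    (x y : Fin n → ℝ) :
    Submodule.span ℝ (Set.range fun i : Fin n =>
        Real.cos (x i) • eInl n m i -
          Real.sin (x i) • eInr n m ⟨(i : ℕ), lt_of_lt_of_le i.isLt hnm⟩) =
      Submodule.span ℝ (Set.range fun i : Fin n =>
        Real.cosh (y i) • eInl n m i +
          Real.sinh (y i) • eInr n m ⟨(i : ℕ), lt_of_lt_of_le i.isLt hnm⟩) ↔
    ∀ i, Real.cos (x i) ≠ 0 ∧ Real.tanh (y i) = -Real.tan (x i) := by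
  set u : Fin n → (Fin n ⊕ Fin m → ℝ) := fun i =>
    Real.cos (x i) • eInl n m i -
      Real.sin (x i) • eInr n m ⟨(i : ℕ), lt_of_lt_of_le i.isLt hnm⟩ with hu
  set v : Fin n → (Fin n ⊕ Fin m → ℝ) := fun i =>
    Real.cosh (y i) • eInl n m i +
      Real.sinh (y i) • eInr n m ⟨(i : ℕ), lt_of_lt_of_le i.isLt hnm⟩ with hv
  have hu' : ∀ i, u i = Real.cos (x i) • eInl n m i +
      (-Real.sin (x i)) • eInr n m ⟨(i : ℕ), lt_of_lt_of_le i.isLt hnm⟩ := by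
    intro i; rw [neg_smul]; rfl
  constructor
  · intro h i
    have hvmem : v i ∈ Submodule.span ℝ (Set.range u) := by
      rw [h]; exact Submodule.subset_span ⟨i, rfl⟩
    rw [show u = (fun j => Real.cos (x j) • eInl n m j +
        (-Real.sin (x j)) • eInr n m ⟨(j : ℕ), lt_of_lt_of_le j.isLt hnm⟩) from funext hu'] at hvmem
    obtain ⟨c, hc⟩ := (Submodule.mem_span_range_iff_exists_fun ℝ).mp hvmem
    have e1 := (eval_sum hnm (fun j => Real.cos (x j)) (fun j => -Real.sin (x j)) c i).1
    have e2 := (eval_sum hnm (fun j => Real.cos (x j)) (fun j => -Real.sin (x j)) c i).2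
    rw [hc] at e1 e2
    have hv1 : (v i) (Sum.inl i) = Real.cosh (y i) := by
      simp [hv, eInl, eInr, Pi.single_apply]
    have hv2 : (v i) (Sum.inr ⟨(i : ℕ), lt_of_lt_of_le i.isLt hnm⟩) = Real.sinh (y i) := by
      simp [hv, eInl, eInr, Pi.single_apply]
    rw [hv1] at e1
    rw [hv2] at e2
    have hcoshpos := Real.cosh_pos (y i)
    have hcos : Real.cos (x i) ≠ 0 := by
      intro h0
      rw [h0, mul_zero] at e1
      exact hcoshpos.ne' e1
    have hcne : c i ≠ 0 := by
      intro h0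
      rw [h0, zero_mul] at e1
      exact hcoshpos.ne' e1
    refine ⟨hcos, ?_⟩
    rw [Real.tanh_eq_sinh_div_cosh, Real.tan_eq_sin_div_cos, e1, e2, mul_neg, neg_div,
      mul_div_mul_left _ _ hcne]
  · intro h
    apply le_antisymm <;> rw [Submodule.span_le] <;> rintro _ ⟨i, rfl⟩
    · obtain ⟨hcos, htanh⟩ := h i
      have hcosh := (Real.cosh_pos (y i)).ne'
      have hsinh : Real.sinh (y i) = -(Real.sin (x i) / Real.cos (x i)) * Real.cosh (y i) := by
        have := Real.tanh_eq_sinh_div_cosh (y i)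
        rw [htanh, Real.tan_eq_sin_div_cos] at this
        field_simp at this ⊢
        linarith
      have s1 : Real.cos (x i) / Real.cosh (y i) * Real.cosh (y i) = Real.cos (x i) :=
        div_mul_cancel₀ _ hcosh
      have s2 : Real.cos (x i) / Real.cosh (y i) * Real.sinh (y i) = -Real.sin (x i) := by
        rw [hsinh]; field_simp
      have : u i = (Real.cos (x i) / Real.cosh (y i)) • v i := by
        rw [hu', hv]
        simp only [smul_add, smul_smul, s1, s2]
      rw [this]
      exact Submodule.smul_mem _ _ (Submodule.subset_span ⟨i, rfl⟩)
    · obtain ⟨hcos, htanh⟩ := h i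
      have hcosh := (Real.cosh_pos (y i)).ne'
      have hsinh : Real.sinh (y i) = -(Real.sin (x i) / Real.cos (x i)) * Real.cosh (y i) := by
        have := Real.tanh_eq_sinh_div_cosh (y i)
        rw [htanh, Real.tan_eq_sin_div_cos] at this
        field_simp at this ⊢
        linarith
      have s1 : Real.cosh (y i) / Real.cos (x i) * Real.cos (x i) = Real.cosh (y i) :=
        div_mul_cancel₀ _ hcos
      have s2 : Real.cosh (y i) / Real.cos (x i) * -Real.sin (x i) = Real.sinh (y i) := by
        rw [hsinh]; field_simp
      have : v i = (Real.cosh (y i) / Real.cos (x i)) • u i := by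
        rw [hu', hv]
        simp only [smul_add, smul_smul, s1, s2]
      rw [this]
      exact Submodule.smul_mem _ _ (Submodule.subset_span ⟨i, rfl⟩)
end
end
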